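/- arXiv:0708.4215 — 4 statements merged into one kernel-verified Lean document; each statement's English description precedes it below -/
import Mathlib

section
/- Let T̂_U and T̂_V be trees of finite binary strings with [T̂_U] nonempty, let (T_{U,s}) and (T_{V,s}) be their canonical approximations, let Ψ be a stagewise functional, and let ℓ be the associated length-of-agreement function. If for every X ∈ [T̂_U] there exists Y ∈ [T̂_V] such that Ψ sends X to Y, then lim_{s→∞} ℓ(s) = ∞; that is, for every n there is a stage t such that ℓ(t') ≥ n for all t' ≥ t. -/
/-- A tree: a set of finite binary strings closed under initial segments. -/
def IsTree (T : Set (List Bool)) : Prop :=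
  ∀ σ ∈ T, ∀ τ : List Bool, τ <+: σ → τ ∈ T

/-- Canonical approximation at stage `s` of a tree `T`. -/
def canonApprox (T : Set (List Bool)) (s : ℕ) : Set (List Bool) :=
  {σ ∈ T | ∃ τ ∈ T, τ.length = s ∧ (τ <+: σ ∨ σ <+: τ)}

/-- The string of the first `n` values of `X`. -/
def restrict (X : ℕ → Bool) (n : ℕ) : List Bool :=
  (List.range n).map X

/-- The set of infinite paths through a set of strings. -/
def paths (T : Set (List Bool)) : Set (ℕ → Bool) :=
  {X | ∀ n, restrict X n ∈ T}

/-- A stagewise functional: monotone in both the stage and the input string. -/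
def Stagewise (Ψ : ℕ → List Bool → List Bool) : Prop :=
  ∀ s s', s ≤ s' → ∀ σ σ' : List Bool, σ <+: σ' → Ψ s σ <+: Ψ s' σ'

/-- The set of which the length of agreement at stage `s` is the least element. -/
def disagreeSet (TU TV : Set (List Bool)) (Ψ : ℕ → List Bool → List Bool) (s : ℕ) :
    Set ℕ :=
  {y | ∃ σ ∈ canonApprox TU s, σ.length = s ∧
      ((Ψ s σ).length < y + 1 ∨ (Ψ s σ).take (y + 1) ∉ canonApprox TV s)}

/-- `Ψ` sends the infinite sequence `X` to the infinite sequence `Y`. -/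
def Sends (Ψ : ℕ → List Bool → List Bool) (X Y : ℕ → Bool) : Prop :=
  ∀ n, ∃ s, restrict Y n <+: Ψ s (restrict X s)

lemma restrict_length (X : ℕ → Bool) (n : ℕ) : (restrict X n).length = n := by
  simp [restrict]

lemma restrict_succ (X : ℕ → Bool) (n : ℕ) :
    restrict X (n+1) = restrict X n ++ [X n] := by
  simp [restrict, List.range_succ]

lemma restrict_take (X : ℕ → Bool) {a b : ℕ} (h : a ≤ b) :
    (restrict X b).take a = restrict X a := by
  rw [restrict, restrict, ← List.map_take, List.take_range, min_eq_left h]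

lemma restrict_prefix (X : ℕ → Bool) {a b : ℕ} (h : a ≤ b) :
    restrict X a <+: restrict X b :=
  restrict_take X h ▸ List.take_prefix a (restrict X b)

/-- Extending a strict prefix by one element of the longer list. -/
lemma prefix_snoc_of_lt {τ ρ : List Bool} (h : τ <+: ρ) (hlt : τ.length < ρ.length) :
    τ ++ [ρ.getD τ.length false] <+: ρ := by
  have hτ : τ = ρ.take τ.length := List.prefix_iff_eq_take.mp h
  have hget : ρ[τ.length]? = some (ρ.getD τ.length false) := by
    rw [List.getElem?_eq_getElem hlt]
    simp [List.getD, List.getElem?_eq_getElem hlt]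
  calc τ ++ [ρ.getD τ.length false] = ρ.take (τ.length + 1) := by
        rw [List.take_succ, hget, ← hτ]; rfl
    _ <+: ρ := List.take_prefix _ _

theorem lengthOfAgreement_tendsto_atTop (TU TV : Set (List Bool))
    (hTU : IsTree TU) (hTV : IsTree TV) (hne : (paths TU).Nonempty)
    (Ψ : ℕ → List Bool → List Bool) (hΨ : Stagewise Ψ)
    (ℓ : ℕ → ℕ) (hℓ : ∀ s, IsLeast (disagreeSet TU TV Ψ s) (ℓ s))
    (hmap : ∀ X ∈ paths TU, ∃ Y ∈ paths TV, Sends Ψ X Y) :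
    ∀ n, ∃ t, ∀ t', t ≤ t' → n ≤ ℓ t' := by
  intro n
  rcases Nat.eq_zero_or_pos n with rfl | hn
  · exact ⟨0, fun _ _ => Nat.zero_le _⟩
  by_contra hcon
  push_neg at hcon
  -- for each stage s choose a witness string for ℓ s ∈ disagreeSet
  choose σ hσmem hσlen hσbad using fun s => (hℓ s).1
  -- P τ : τ is a prefix of witnesses at arbitrarily large bad stages
  set P : List Bool → Prop :=
    fun τ => ∀ m, ∃ t, m ≤ t ∧ ℓ t < n ∧ τ <+: σ t with hP
  have hP0 : P [] := by
    intro m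
    obtain ⟨t, ht, hlt⟩ := hcon m
    exact ⟨t, ht, hlt, List.nil_prefix⟩
  have step : ∀ τ, P τ → ∃ b, P (τ ++ [b]) := by
    intro τ hτ
    by_contra hb
    push_neg at hb
    have h1 := hb true
    have h2 := hb false
    simp only [hP] at h1 h2
    push_neg at h1 h2
    obtain ⟨m1, hm1⟩ := h1
    obtain ⟨m2, hm2⟩ := h2
    obtain ⟨t, ht, hlt, hpre⟩ := hτ (max (max m1 m2) (τ.length + 1))
    have hlen : τ.length < (σ t).length := by
      rw [hσlen t]; omega
    have hext := prefix_snoc_of_lt hpre hlen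
    cases hbit : (σ t).getD τ.length false with
    | true =>
      exact hm1 t (le_trans (le_trans (le_max_left _ _) (le_max_left _ _)) ht) hlt (hbit ▸ hext)
    | false =>
      exact hm2 t (le_trans (le_trans (le_max_right _ _) (le_max_left _ _)) ht) hlt (hbit ▸ hext)
  -- build the path by recursion
  let F : ∀ k : ℕ, {τ : List Bool // P τ ∧ τ.length = k} := fun k =>
    Nat.rec ⟨[], hP0, rfl⟩
      (fun k ih => ⟨ih.1 ++ [Classical.choose (step ih.1 ih.2.1)],
        Classical.choose_spec (step ih.1 ih.2.1), by simp [ih.2.2]⟩) k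
  set X : ℕ → Bool := fun k => ((F (k+1)).1).getLastD false with hX
  have hres : ∀ m, restrict X m = (F m).1 := by
    intro m
    induction m with
    | zero =>
      show restrict X 0 = [] 
      simp [restrict]
    | succ m ih =>
      rw [restrict_succ, ih]
      show (F m).1 ++ [((F (m+1)).1).getLastD false] = (F (m+1)).1
      have : (F (m+1)).1 = (F m).1 ++ [Classical.choose (step (F m).1 (F m).2.1)] := rfl
      rw [this]
      simp
  have hXpath : X ∈ paths TU := by
    intro m
    obtain ⟨t, _, _, hpre⟩ := (F m).2.1 0
    exact hTU _ (hσmem t).1 _ (hres m ▸ hpre)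
  obtain ⟨Y, hYpath, hsends⟩ := hmap X hXpath
  obtain ⟨s0, hs0⟩ := hsends n
  -- find a bad stage past max s0 n
  obtain ⟨t, ht, hlt, hpre⟩ := (F (max s0 n)).2.1 (max s0 n)
  rw [← hres] at hpre
  -- Ψ t (σ t) extends restrict Y n
  have hchain : Ψ s0 (restrict X s0) <+: Ψ t (σ t) := by
    refine hΨ s0 t (le_trans (le_max_left _ _) ht) _ _ ?_
    exact (restrict_prefix X (le_max_left s0 n)).trans hpre
  have hYpre : restrict Y n <+: Ψ t (σ t) := hs0.trans hchain
  have hYlen : n ≤ (Ψ t (σ t)).length := by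
    have := hYpre.length_le
    rwa [restrict_length] at this
  set y := ℓ t with hy
  have hy1 : y + 1 ≤ n := hlt
  -- derive the contradiction from the disagreement at σ t
  rcases hσbad t with hshort | hnot
  · exact absurd hshort (Nat.not_lt.mpr (hy1.trans hYlen))
  · apply hnot
    have htake : (Ψ t (σ t)).take (y+1) = restrict Y (y+1) := by
      obtain ⟨u, hu⟩ := hYpre
      rw [← hu, List.take_append_of_le_length (by rw [restrict_length]; exact hy1),
        restrict_take Y hy1]
    rw [htake]
    refine ⟨hYpath (y+1), restrict Y t, hYpath t, restrict_length Y t, Or.inr ?_⟩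
    exact restrict_prefix Y (le_trans (hy1.trans (le_max_right s0 n)) ht)
end

section
/- Let T̂_U and T̂_V be trees of finite binary strings with [T̂_U] nonempty, let (T_{U,s}) and (T_{V,s}) be their canonical approximations, let Ψ be a stagewise functional, and let ℓ be the associated length-of-agreement function. If limsup_{s→∞} ℓ(s) = ∞ (that is, for every n there are infinitely many s with ℓ(s) ≥ n), then for every X ∈ [T̂_U] there exists Y ∈ [T̂_V] such that Ψ sends X to Y. -/
theorem limsup_lengthOfAgreement_infinite_maps (TU TV : Set (List Bool))
    (hTU : IsTree TU) (hTV : IsTree TV) (hne : (paths TU).Nonempty)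
    (Ψ : ℕ → List Bool → List Bool) (hΨ : Stagewise Ψ)
    (ℓ : ℕ → ℕ) (hℓ : ∀ s, IsLeast (disagreeSet TU TV Ψ s) (ℓ s))
    (hsup : ∀ n t, ∃ s, t ≤ s ∧ n ≤ ℓ s) :
    ∀ X ∈ paths TU, ∃ Y ∈ paths TV, Sends Ψ X Y := by
  intro X hX
  set f : ℕ → List Bool := fun s => Ψ s (restrict X s) with hf
  have hres : ∀ s s' : ℕ, s ≤ s' → restrict X s <+: restrict X s' := by
    intro s s' h
    have : restrict X s = (restrict X s').take s := by
      simp [restrict, ← List.map_take, List.take_range, Nat.min_eq_left h]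
    rw [this]
    exact List.take_prefix _ _
  have chain : ∀ s s' : ℕ, s ≤ s' → f s <+: f s' := fun s s' h =>
    hΨ s s' h _ _ (hres s s' h)
  have key : ∀ n t, ∃ s, t ≤ s ∧ n + 1 ≤ (f s).length ∧ (f s).take (n+1) ∈ TV := by
    intro n t
    obtain ⟨s, hts, hn⟩ := hsup (n+1) t
    have hmem : restrict X s ∈ canonApprox TU s :=
      ⟨hX s, restrict X s, hX s, by simp [restrict], Or.inl (List.prefix_refl _)⟩
    have hnot : n ∉ disagreeSet TU TV Ψ s := fun h => absurd ((hℓ s).2 h) (by omega)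
    simp only [disagreeSet, Set.mem_setOf_eq] at hnot
    push_neg at hnot
    have h2 := hnot (restrict X s) hmem (by simp [restrict])
    exact ⟨s, hts, h2.1, h2.2.1⟩
  have hagree : ∀ s s' n, n < (f s).length → n < (f s').length →
      (f s).getD n false = (f s').getD n false := by
    have main : ∀ s s' n, s ≤ s' → n < (f s).length →
        (f s).getD n false = (f s').getD n false := by
      intro s s' n hle h
      obtain ⟨u, hu⟩ := chain s s' hle
      rw [← hu, List.getD_append _ _ _ _ h]
    intro s s' n h h'
    rcases le_total s s' with hle | hle
    · exact main s s' n hle h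
    · exact (main s' s n hle h').symm
  classical
  set Y : ℕ → Bool := fun n => (f (Classical.choose (key n 0))).getD n false with hY
  have hrestr : ∀ s n, n ≤ (f s).length → restrict Y n = (f s).take n := by
    intro s n hn
    apply List.ext_getElem
    · simp [restrict, Nat.min_eq_left hn]
    · intro i h1 h2
      have hi : i < n := by simpa [restrict] using h1
      have hilen : i < (f s).length := lt_of_lt_of_le hi hn
      have hYi : Y i = (f s).getD i false := by
        have hc := Classical.choose_spec (key i 0)
        exact hagree _ s i (by omega) hilen
      simp [restrict, hYi, List.getD, List.getElem?_eq_getElem hilen]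
  refine ⟨Y, ?_, ?_⟩
  · intro n
    obtain ⟨s, _, hlen, htv⟩ := key n 0
    rw [hrestr s n (by omega)]
    refine hTV _ htv _ ?_
    have : (f s).take n = ((f s).take (n+1)).take n := by
      rw [List.take_take, Nat.min_eq_left (by omega)]
    rw [this]
    exact List.take_prefix _ _
  · intro n
    obtain ⟨s, _, hlen, _⟩ := key n 0
    exact ⟨s, by rw [hrestr s n (by omega)]; exact List.take_prefix _ _⟩
end

section
/- Let T̂_U and T̂_V be trees of finite binary strings with [T̂_U] nonempty, let (T_{U,s}) and (T_{V,s}) be their canonical approximations, let Ψ be a stagewise functional, and let ℓ be the associated length-of-agreement function. Then the following are equivalent: (1) limsup_{s→∞} ℓ(s) = ∞, i.e. for every n there are infinitely many s with ℓ(s) ≥ n; (2) liminf_{s→∞} ℓ(s) = ∞, i.e. for every n, ℓ(s) ≥ n for all sufficiently large s; (3) lim_{s→∞} ℓ(s) = ∞, i.e. ℓ tends to infinity. In particular, it never happens that liminf_{s→∞} ℓ(s) is finite while limsup_{s→∞} ℓ(s) = ∞. -/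
/-- Membership in canonical approximations is antitone in the stage. -/
lemma canonApprox_antitone {T : Set (List Bool)} (hT : IsTree T) {ρ : List Bool}
    {s s' : ℕ} (hss : s ≤ s') (h : ρ ∈ canonApprox T s') : ρ ∈ canonApprox T s := by
  obtain ⟨hρ, τ, hτ, hlen, hcomp⟩ := h
  refine ⟨hρ, τ.take s, hT τ hτ _ (List.take_prefix _ _), by simp [hlen]; omega, ?_⟩
  rcases hcomp with h1 | h2
  · exact Or.inl ((List.take_prefix _ _).trans h1)
  · rcases le_or_gt ρ.length s with hle | hlt
    · exact Or.inr (List.prefix_take_iff.mpr ⟨h2, hle⟩)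
    · obtain ⟨r, rfl⟩ := h2
      left
      rw [List.take_append_of_le_length (by omega)]
      exact List.take_prefix _ _

theorem lengthOfAgreement_limsup_liminf_lim_equiv (TU TV : Set (List Bool))
    (hTU : IsTree TU) (hTV : IsTree TV) (hne : (paths TU).Nonempty)
    (Ψ : ℕ → List Bool → List Bool) (hΨ : Stagewise Ψ)
    (ℓ : ℕ → ℕ) (hℓ : ∀ s, IsLeast (disagreeSet TU TV Ψ s) (ℓ s)) :
    ((∀ n, ∀ t, ∃ s, t ≤ s ∧ n ≤ ℓ s) ↔ (∀ n, ∃ t, ∀ s, t ≤ s → n ≤ ℓ s)) ∧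
      ((∀ n, ∃ t, ∀ s, t ≤ s → n ≤ ℓ s) ↔ Filter.Tendsto ℓ Filter.atTop Filter.atTop) := by
  classical
  have main : (∀ n, ∀ t, ∃ s, t ≤ s ∧ n ≤ ℓ s) → ∀ n, ∃ t, ∀ s, t ≤ s → n ≤ ℓ s := by
    intro hsup n
    -- for each string, a stage after which it is dead forever (if it ever dies)
    have hdd : ∀ ρ : List Bool, ∃ d : ℕ,
        (∃ s, ρ ∉ canonApprox TV s) → ∀ s, d ≤ s → ρ ∉ canonApprox TV s := by
      intro ρ
      by_cases h : ∃ s, ρ ∉ canonApprox TV s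
      · obtain ⟨s₀, hs₀⟩ := h
        exact ⟨s₀, fun _ s hs hmem => hs₀ (canonApprox_antitone hTV hs hmem)⟩
      · exact ⟨0, fun h' => absurd h' h⟩
    choose d hd using hdd
    -- a bound for d on strings of length ≤ n
    have hfin : {l : List Bool | l.length ≤ n}.Finite := List.finite_length_le _ _
    obtain ⟨t₁, ht₁⟩ := (hfin.image d).bddAbove
    have hbound : ∀ ρ : List Bool, ρ.length ≤ n → d ρ ≤ t₁ := fun ρ hρ =>
      ht₁ (Set.mem_image_of_mem d hρ)
    obtain ⟨s₀, hs₀t, hs₀ℓ⟩ := hsup n t₁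
    refine ⟨s₀, fun s' hs' => ?_⟩
    by_contra hlt
    push_neg at hlt
    obtain ⟨σ', hσ'can, hσ'len, hbad⟩ := (hℓ s').1
    set y := ℓ s' with hy
    -- the stage-s₀ prefix of σ'
    have hσU : σ'.take s₀ ∈ TU := hTU σ' hσ'can.1 _ (List.take_prefix _ _)
    have hσlen : (σ'.take s₀).length = s₀ := by simp [hσ'len]; omega
    have hσcan : σ'.take s₀ ∈ canonApprox TU s₀ :=
      ⟨hσU, σ'.take s₀, hσU, hσlen, Or.inl (List.prefix_refl _)⟩
    have hynot : y ∉ disagreeSet TU TV Ψ s₀ := fun h => by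
      have := (hℓ s₀).2 h; omega
    have hgood : ¬((Ψ s₀ (σ'.take s₀)).length < y + 1 ∨
        (Ψ s₀ (σ'.take s₀)).take (y + 1) ∉ canonApprox TV s₀) := fun h =>
      hynot ⟨_, hσcan, hσlen, h⟩
    push_neg at hgood
    obtain ⟨hlen1, hρmem⟩ := hgood
    have hpre : Ψ s₀ (σ'.take s₀) <+: Ψ s' σ' :=
      hΨ s₀ s' hs' _ _ (List.take_prefix _ _)
    set ρ := (Ψ s₀ (σ'.take s₀)).take (y + 1) with hρ
    have hρlen : ρ.length = y + 1 := by simp [hρ]; omega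
    have hρpre : ρ <+: Ψ s' σ' := (List.take_prefix _ _).trans hpre
    have htake : (Ψ s' σ').take (y + 1) = ρ := by
      have h := List.prefix_iff_eq_take.mp hρpre
      rw [hρlen] at h
      exact h.symm
    -- ρ is alive at stage s₀ ≥ t₁, hence alive forever
    have hρalive : ρ ∈ canonApprox TV s' := by
      by_contra hdead
      exact hd ρ ⟨s', hdead⟩ s₀ (le_trans (hbound ρ (by omega)) hs₀t) hρmem
    rcases hbad with h1 | h2
    · have := hρpre.length_le
      omega
    · rw [htake] at h2; exact h2 hρalive
  refine ⟨⟨main, fun h n t => ?_⟩, ?_⟩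
  · obtain ⟨t₀, ht₀⟩ := h n
    exact ⟨max t t₀, le_max_left _ _, ht₀ _ (le_max_right _ _)⟩
  · constructor
    · intro h
      rw [Filter.tendsto_atTop]
      intro b
      obtain ⟨t, ht⟩ := h b
      exact Filter.eventually_atTop.mpr ⟨t, ht⟩
    · intro h n
      obtain ⟨t, ht⟩ := Filter.eventually_atTop.mp ((Filter.tendsto_atTop.mp h) n)
      exact ⟨t, ht⟩
end

section
/- Let T̂_U and T̂_V be trees of finite binary strings with [T̂_U] nonempty, let (T_{U,s}) and (T_{V,s}) be their canonical approximations, let Ψ be a stagewise functional, and let ℓ be the associated length-of-agreement function. Then for every fixed n ∈ ℕ there is a stage r such that either ℓ(r') ≥ n for all r' ≥ r, or ℓ(r') < n for all r' ≥ r. -/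
/-!
For `s ≥ |ρ|`, a string `ρ` can only drop out of the canonical approximation `T_s` as `s` grows,
so beyond some stage `s₀` the finitely many strings of length at most `n` have stable membership
in `T_{V,s}`. After `s₀`, `n ≤ ℓ s` persists: a string of length `r ≥ s` extends one of length `s`,
and by monotonicity of `Ψ` its image agrees on the first `n` bits with an image at stage `s`, and
those bits stay in `T_{V,r}`. So either `n ≤ ℓ` at some stage after `s₀`, and then forever, or
`ℓ < n` at every stage after `s₀`.
-/

theorem List.IsPrefix.take_eq_take {α : Type*} {l₁ l₂ : List α} (h : l₁ <+: l₂) {n : ℕ}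
    (hn : n ≤ l₁.length) : l₂.take n = l₁.take n := by
  obtain ⟨t, rfl⟩ := h
  simp [List.take_append, Nat.sub_eq_zero_of_le hn]

theorem IsLeast.le_iff_forall_lt_notMem {α : Type*} [LinearOrder α] {S : Set α} {a b : α}
    (h : IsLeast S a) : b ≤ a ↔ ∀ y < b, y ∉ S :=
  ⟨fun hba _ hy hyS => (hy.trans_le hba).not_ge (h.2 hyS),
    fun hS => not_lt.1 fun hab => hS a hab h.1⟩

section canonApprox

variable {T : Set (List Bool)} {s s' : ℕ} {ρ : List Bool}

theorem mem_canonApprox_of_length_eq (hρ : ρ ∈ T) (hlen : ρ.length = s) :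
    ρ ∈ canonApprox T s :=
  ⟨hρ, ρ, hρ, hlen, Or.inl List.prefix_rfl⟩

theorem IsTree.mem_canonApprox_of_le (hT : IsTree T) (hρ : ρ.length ≤ s) (hss : s ≤ s')
    (h : ρ ∈ canonApprox T s') : ρ ∈ canonApprox T s := by
  obtain ⟨hmem, τ, hτ, hτlen, hτρ | hρτ⟩ := h
  · have hlen : ρ.length = s := by
      have := hτρ.eq_of_length_le (by omega)
      subst this
      omega
    exact mem_canonApprox_of_length_eq hmem hlen
  · refine ⟨hmem, τ.take s, hT τ hτ _ (List.take_prefix _ _), by simp [hτlen, hss], ?_⟩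
    exact Or.inr (List.prefix_take_iff.2 ⟨hρτ, hρ⟩)

theorem IsTree.eventually_mem_canonApprox_stable (hT : IsTree T) (ρ : List Bool) :
    ∀ᶠ s in Filter.atTop, ∀ s', s ≤ s' → ρ ∈ canonApprox T s → ρ ∈ canonApprox T s' := by
  by_cases hout : ∃ m, ρ.length ≤ m ∧ ρ ∉ canonApprox T m
  · obtain ⟨m, hm, hρm⟩ := hout
    exact Filter.eventually_atTop.2
      ⟨m, fun s hs s' hss hρ => absurd (hT.mem_canonApprox_of_le hm hs hρ) hρm⟩
  · push Not at hout
    exact Filter.eventually_atTop.2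
      ⟨ρ.length, fun s hs s' hss _ => hout s' (hs.trans hss)⟩

end canonApprox

theorem notMem_disagreeSet_of_le {TU TV : Set (List Bool)} (hTU : IsTree TU)
    {Ψ : ℕ → List Bool → List Bool} (hΨ : Stagewise Ψ) {y s r : ℕ} (hsr : s ≤ r)
    (hstable : ∀ ρ : List Bool, ρ.length = y + 1 →
      ρ ∈ canonApprox TV s → ρ ∈ canonApprox TV r)
    (hy : y ∉ disagreeSet TU TV Ψ s) : y ∉ disagreeSet TU TV Ψ r := by
  rintro ⟨σ', hσ', hσ'len, hdis⟩
  set σ := σ'.take s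
  have hσσ' : σ <+: σ' := List.take_prefix _ _
  have hσlen : σ.length = s := by simp [σ, hσ'len, hsr]
  have hσ : σ ∈ canonApprox TU s :=
    mem_canonApprox_of_length_eq (hTU σ' hσ'.1 σ hσσ') hσlen
  have hagree : y + 1 ≤ (Ψ s σ).length ∧ (Ψ s σ).take (y + 1) ∈ canonApprox TV s := by
    by_contra hbad
    rw [not_and_or, not_le] at hbad
    exact hy ⟨σ, hσ, hσlen, hbad⟩
  have hΨσ : Ψ s σ <+: Ψ r σ' := hΨ s r hsr σ σ' hσσ'
  rw [hΨσ.take_eq_take hagree.1] at hdis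
  rcases hdis with hshort | hout
  · exact absurd (hagree.1.trans hΨσ.length_le) (by omega)
  · exact hout (hstable _ (by simp [hagree.1]) hagree.2)

theorem lengthOfAgreement_eventually_ge_or_lt_general (TU TV : Set (List Bool))
    (hTU : IsTree TU) (hTV : IsTree TV)
    (Ψ : ℕ → List Bool → List Bool) (hΨ : Stagewise Ψ)
    (ℓ : ℕ → ℕ) (hℓ : ∀ s, IsLeast (disagreeSet TU TV Ψ s) (ℓ s)) :
    ∀ n, ∃ r, (∀ r', r ≤ r' → n ≤ ℓ r') ∨ (∀ r', r ≤ r' → ℓ r' < n) := by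
  intro n
  obtain ⟨s₀, hs₀⟩ := Filter.eventually_atTop.1 <|
    (Filter.eventually_all_finite (List.finite_length_le Bool n)).2
      fun ρ _ => hTV.eventually_mem_canonApprox_stable ρ
  by_cases hgood : ∃ s, s₀ ≤ s ∧ n ≤ ℓ s
  · obtain ⟨s, hs, hns⟩ := hgood
    refine ⟨s, Or.inl fun r hsr => (hℓ r).le_iff_forall_lt_notMem.2 fun y hy => ?_⟩
    exact notMem_disagreeSet_of_le hTU hΨ hsr
      (fun ρ hρ => hs₀ s hs ρ (show ρ.length ≤ n by omega) r hsr)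
      ((hℓ s).le_iff_forall_lt_notMem.1 hns y hy)
  · push Not at hgood
    exact ⟨s₀, Or.inr hgood⟩

theorem lengthOfAgreement_eventually_ge_or_lt (TU TV : Set (List Bool))
    (hTU : IsTree TU) (hTV : IsTree TV) (hne : (paths TU).Nonempty)
    (Ψ : ℕ → List Bool → List Bool) (hΨ : Stagewise Ψ)
    (ℓ : ℕ → ℕ) (hℓ : ∀ s, IsLeast (disagreeSet TU TV Ψ s) (ℓ s)) :
    ∀ n, ∃ r, (∀ r', r ≤ r' → n ≤ ℓ r') ∨ (∀ r', r ≤ r' → ℓ r' < n) :=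
  lengthOfAgreement_eventually_ge_or_lt_general TU TV hTU hTV Ψ hΨ ℓ hℓ
end
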